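/- Let n be a positive integer, G a real n×n matrix, b ∈ ℝⁿ, and λ ≥ 0. A point x₀ ∈ ℝⁿ is a global minimizer of the robust objective J(x) = sup{ ‖(G + E)x − (b + e)‖₂ : ‖E‖_F ≤ λ, ‖e‖₂ ≤ λ } if and only if x₀ is a global minimizer of the regularized objective R(x) = ‖Gx − b‖₂ + λ‖x‖₂. -/

import Mathlib

/-! A perturbation `(E, e)` moves the residual `Gx - b` by `Ex - e`. As `E` ranges over the
Frobenius ball of radius `λ`, the vector `Ex` fills the Euclidean ball of radius `λ‖x‖`: the
rank-one matrix `y xᵀ / ‖x‖²` sends `x` to `y` and has Frobenius norm `‖y‖ / ‖x‖`. Hence the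
perturbed residuals fill the closed ball of radius `λ‖x‖ + λ` about `Gx - b`, whose farthest
point from the origin (for `n ≥ 1`) lies at distance `‖Gx - b‖ + λ‖x‖ + λ`. So the robust
objective is the regularized one plus the constant `λ`, and the two have the same minimizers. -/

/-- Euclidean norm of a vector in ℝⁿ. -/
noncomputable def eNorm {n : ℕ} (v : Fin n → ℝ) : ℝ :=
  Real.sqrt (∑ i, v i ^ 2)

/-- Frobenius norm of a real matrix. -/
noncomputable def fNorm {m n : ℕ} (M : Matrix (Fin m) (Fin n) ℝ) : ℝ :=
  Real.sqrt (∑ i, ∑ j, M i j ^ 2)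

/-- The robust objective: worst-case residual over Frobenius-bounded matrix
perturbations and Euclidean-bounded vector perturbations. -/
noncomputable def robustObj {n : ℕ} (G : Matrix (Fin n) (Fin n) ℝ)
    (b : Fin n → ℝ) (lam : ℝ) (x : Fin n → ℝ) : ℝ :=
  sSup {r : ℝ | ∃ (E : Matrix (Fin n) (Fin n) ℝ) (e : Fin n → ℝ),
      fNorm E ≤ lam ∧ eNorm e ≤ lam ∧
      r = eNorm ((G + E).mulVec x - (b + e))}

/-- The regularized objective ‖Gx − b‖₂ + λ‖x‖₂. -/
noncomputable def regObj {n : ℕ} (G : Matrix (Fin n) (Fin n) ℝ)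
    (b : Fin n → ℝ) (lam : ℝ) (x : Fin n → ℝ) : ℝ :=
  eNorm (G.mulVec x - b) + lam * eNorm x

open Matrix Metric
open scoped Pointwise

lemma eNorm_eq_norm_toLp {n : ℕ} (v : Fin n → ℝ) : eNorm v = ‖WithLp.toLp 2 v‖ := by
  simp [eNorm, EuclideanSpace.norm_eq]

lemma eNorm_nonneg {n : ℕ} (v : Fin n → ℝ) : 0 ≤ eNorm v := Real.sqrt_nonneg _

lemma eNorm_sq_eq_dotProduct {n : ℕ} (v : Fin n → ℝ) : eNorm v ^ 2 = v ⬝ᵥ v := by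
  rw [eNorm, Real.sq_sqrt (Finset.sum_nonneg fun i _ => sq_nonneg _)]
  simp only [dotProduct, sq]

lemma eNorm_smul {n : ℕ} (c : ℝ) (v : Fin n → ℝ) : eNorm (c • v) = |c| * eNorm v := by
  simp [eNorm_eq_norm_toLp, norm_smul]

lemma eNorm_mulVec_le {m n : ℕ} (E : Matrix (Fin m) (Fin n) ℝ) (x : Fin n → ℝ) :
    eNorm (E *ᵥ x) ≤ fNorm E * eNorm x := by
  have hE : 0 ≤ ∑ i, ∑ j, E i j ^ 2 := by positivity
  rw [eNorm, fNorm, eNorm, ← Real.sqrt_mul hE, Finset.sum_mul]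
  exact Real.sqrt_le_sqrt (Finset.sum_le_sum fun i _ =>
    Finset.sum_mul_sq_le_sq_mul_sq Finset.univ (E i) x)

lemma fNorm_vecMulVec {m n : ℕ} (u : Fin m → ℝ) (v : Fin n → ℝ) :
    fNorm (vecMulVec u v) = eNorm u * eNorm v := by
  simp only [fNorm, eNorm, vecMulVec_apply, mul_pow, ← Finset.mul_sum, ← Finset.sum_mul]
  exact Real.sqrt_mul (Finset.sum_nonneg fun i _ => sq_nonneg _) _

lemma exists_fNorm_le_mulVec_eq {m n : ℕ} {lam : ℝ} (hlam : 0 ≤ lam) (x : Fin n → ℝ)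
    {y : Fin m → ℝ} (hy : eNorm y ≤ lam * eNorm x) :
    ∃ E : Matrix (Fin m) (Fin n) ℝ, fNorm E ≤ lam ∧ E *ᵥ x = y := by
  rcases eq_or_ne x 0 with rfl | hx
  · have hy0 : y = 0 := by simpa [eNorm_eq_norm_toLp] using hy
    exact ⟨0, by simpa [fNorm] using hlam, by simp [hy0]⟩
  · have hxpos : 0 < eNorm x := by simpa [eNorm_eq_norm_toLp] using hx
    refine ⟨vecMulVec y ((eNorm x ^ 2)⁻¹ • x), ?_, ?_⟩
    · rw [fNorm_vecMulVec, eNorm_smul, abs_of_pos (by positivity), ← div_eq_inv_mul,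
        sq, div_mul_cancel_right₀ hxpos.ne', ← div_eq_mul_inv, div_le_iff₀ hxpos]
      exact hy
    · rw [vecMulVec_mulVec, smul_dotProduct, ← eNorm_sq_eq_dotProduct, smul_eq_mul,
        inv_mul_cancel₀ (by positivity), MulOpposite.op_one, one_smul]

lemma exists_eNorm_le_sub_eq {m : ℕ} {a c : ℝ} (ha : 0 ≤ a) (hc : 0 ≤ c) {z : Fin m → ℝ}
    (hz : eNorm z ≤ a + c) : ∃ y e : Fin m → ℝ, eNorm y ≤ a ∧ eNorm e ≤ c ∧ z = y - e := by
  have hmem : WithLp.toLp 2 z ∈ closedBall (0 : EuclideanSpace ℝ (Fin m)) a -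
      closedBall (0 : EuclideanSpace ℝ (Fin m)) c := by
    rw [closedBall_sub_closedBall ha hc, sub_zero, mem_closedBall_zero_iff, ← eNorm_eq_norm_toLp]
    exact hz
  obtain ⟨y, hy, e, he, hyez⟩ := hmem
  refine ⟨y.ofLp, e.ofLp, ?_, ?_, ?_⟩
  · simpa [eNorm_eq_norm_toLp] using hy
  · simpa [eNorm_eq_norm_toLp] using he
  · rw [← WithLp.ofLp_sub, ← WithLp.ofLp_toLp 2 z, ← hyez]

lemma isGreatest_image_norm_add_closedBall {V : Type*} [NormedAddCommGroup V]
    [NormedSpace ℝ V] [Nontrivial V] (r : V) {R : ℝ} (hR : 0 ≤ R) :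
    IsGreatest ((fun z => ‖r + z‖) '' closedBall 0 R) (‖r‖ + R) := by
  obtain ⟨u, hu, hru⟩ : ∃ u : V, ‖u‖ = 1 ∧ r = ‖r‖ • u := by
    rcases eq_or_ne r 0 with rfl | hr
    · obtain ⟨u, hu⟩ := exists_norm_eq V zero_le_one
      exact ⟨u, hu, by simp⟩
    · refine ⟨‖r‖⁻¹ • r, norm_smul_inv_norm hr, ?_⟩
      rw [smul_smul, mul_inv_cancel₀ (norm_ne_zero_iff.2 hr), one_smul]
  refine ⟨⟨R • u, ?_, ?_⟩, ?_⟩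
  · rw [mem_closedBall_zero_iff, norm_smul, hu, mul_one, Real.norm_of_nonneg hR]
  · calc ‖r + R • u‖ = ‖(‖r‖ + R) • u‖ := by rw [add_smul, ← hru]
      _ = ‖r‖ + R := by rw [norm_smul, hu, mul_one, Real.norm_of_nonneg (by positivity)]
  · rintro _ ⟨z, hz, rfl⟩
    exact (norm_add_le r z).trans (by simpa using hz)

lemma perturbedResiduals_eq_image {m n : ℕ} (G : Matrix (Fin m) (Fin n) ℝ) (b : Fin m → ℝ)
    {lam : ℝ} (hlam : 0 ≤ lam) (x : Fin n → ℝ) :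
    {t : ℝ | ∃ (E : Matrix (Fin m) (Fin n) ℝ) (e : Fin m → ℝ),
        fNorm E ≤ lam ∧ eNorm e ≤ lam ∧ t = eNorm ((G + E) *ᵥ x - (b + e))} =
      (fun z => ‖WithLp.toLp 2 (G *ᵥ x - b) + z‖) '' closedBall 0 (lam * eNorm x + lam) := by
  ext t
  constructor
  · rintro ⟨E, e, hE, he, rfl⟩
    refine ⟨WithLp.toLp 2 (E *ᵥ x - e), ?_, ?_⟩
    · rw [mem_closedBall_zero_iff, WithLp.toLp_sub]
      calc ‖WithLp.toLp 2 (E *ᵥ x) - WithLp.toLp 2 e‖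
          ≤ ‖WithLp.toLp 2 (E *ᵥ x)‖ + ‖WithLp.toLp 2 e‖ := norm_sub_le _ _
        _ ≤ fNorm E * eNorm x + eNorm e := by
          rw [← eNorm_eq_norm_toLp, ← eNorm_eq_norm_toLp]
          gcongr
          exact eNorm_mulVec_le E x
        _ ≤ lam * eNorm x + lam := by
          gcongr
          exact eNorm_nonneg x
    · dsimp only
      rw [eNorm_eq_norm_toLp, ← WithLp.toLp_add, add_mulVec]
      congr 2
      abel
  · rintro ⟨z, hz, rfl⟩
    have hz' : eNorm z.ofLp ≤ lam * eNorm x + lam := by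
      simpa [eNorm_eq_norm_toLp] using hz
    obtain ⟨y, e, hy, he, hyez⟩ := exists_eNorm_le_sub_eq
      (mul_nonneg hlam (eNorm_nonneg x)) hlam hz'
    obtain ⟨E, hE, rfl⟩ := exists_fNorm_le_mulVec_eq hlam x hy
    refine ⟨E, e, hE, he, ?_⟩
    dsimp only
    rw [eNorm_eq_norm_toLp, ← WithLp.toLp_ofLp 2 z, hyez, ← WithLp.toLp_add, add_mulVec]
    congr 2
    abel

lemma robustObj_eq_regObj_add {n : ℕ} (hn : 0 < n) (G : Matrix (Fin n) (Fin n) ℝ)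
    (b : Fin n → ℝ) {lam : ℝ} (hlam : 0 ≤ lam) (x : Fin n → ℝ) :
    robustObj G b lam x = regObj G b lam x + lam := by
  have : NeZero n := ⟨hn.ne'⟩
  rw [robustObj, perturbedResiduals_eq_image G b hlam x,
    (isGreatest_image_norm_add_closedBall _
      (add_nonneg (mul_nonneg hlam (eNorm_nonneg x)) hlam)).csSup_eq, regObj,
    eNorm_eq_norm_toLp (G *ᵥ x - b)]
  ring

/-- A point is a global minimizer of the robust objective iff it is a global
minimizer of the regularized objective. -/
theorem robust_minimizer_iff_regularized_minimizer (n : ℕ) (hn : 0 < n)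
    (G : Matrix (Fin n) (Fin n) ℝ) (b : Fin n → ℝ) (lam : ℝ) (hlam : 0 ≤ lam)
    (x₀ : Fin n → ℝ) :
    (∀ x : Fin n → ℝ, robustObj G b lam x₀ ≤ robustObj G b lam x) ↔
    (∀ x : Fin n → ℝ, regObj G b lam x₀ ≤ regObj G b lam x) := by
  simp only [robustObj_eq_regObj_add hn G b hlam, add_le_add_iff_right]
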